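/- arXiv:2206.09100 — 4 statements merged into one kernel-verified Lean document; each statement's English description precedes it below -/
import Mathlib

section
/- The matrix J(M) := Σ_{n≥0} M^n/(n+1)! is invertible if and only if no eigenvalue of M belongs to the set {2kπi : k ∈ ℤ, k ≠ 0}. -/
/-! `J(λ) = ∑ λ^k/(k+1)! = (e^λ - 1)/λ` vanishes exactly on `2πiℤ \ {0}`. An eigenvector of `M` for
`λ` is an eigenvector of `J(M)` for `J(λ)`, which gives one direction. Conversely `J(M)` commutes
with `M`, so the kernel of a singular `J(M)` is `M`-invariant and contains an eigenvector of `M`;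
its eigenvalue `λ` then satisfies `J(λ) = 0`. -/

noncomputable def Jmat {n : ℕ} (M : Matrix (Fin n) (Fin n) ℂ) : Matrix (Fin n) (Fin n) ℂ :=
  ∑' k : ℕ, (((k + 1).factorial : ℂ))⁻¹ • M ^ k

open scoped Nat
open Matrix Module End Complex

noncomputable def Jfun (z : ℂ) : ℂ := ∑' k : ℕ, ((k + 1)! : ℂ)⁻¹ * z ^ k

theorem summable_inv_factorial_succ_smul_pow {𝕂 𝔸 : Type*} [RCLike 𝕂] [NormedRing 𝔸]
    [NormedAlgebra 𝕂 𝔸] [CompleteSpace 𝔸] (a : 𝔸) :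
    Summable fun k : ℕ => ((k + 1)! : 𝕂)⁻¹ • a ^ k := by
  refine .of_norm_bounded (NormedSpace.norm_expSeries_summable' (𝕂 := 𝕂) a) fun k => ?_
  rw [norm_smul, norm_smul, norm_inv, norm_inv, RCLike.norm_natCast, RCLike.norm_natCast]
  gcongr
  exact k.le_succ

theorem hasSum_Jfun (z : ℂ) : HasSum (fun k : ℕ => ((k + 1)! : ℂ)⁻¹ * z ^ k) (Jfun z) :=
  Summable.hasSum <| by
    simpa only [smul_eq_mul] using summable_inv_factorial_succ_smul_pow (𝕂 := ℂ) z

theorem hasSum_Jmat {n : ℕ} (M : Matrix (Fin n) (Fin n) ℂ) :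
    HasSum (fun k : ℕ => ((k + 1)! : ℂ)⁻¹ • M ^ k) (Jmat M) :=
  -- any matrix norm will do: its topology is the entrywise one
  letI := Matrix.linftyOpNormedRing (n := Fin n) (α := ℂ)
  letI := Matrix.linftyOpNormedAlgebra (R := ℂ) (n := Fin n) (α := ℂ)
  (summable_inv_factorial_succ_smul_pow M).hasSum

theorem mul_Jfun (z : ℂ) : z * Jfun z = exp z - 1 := by
  have hexp : HasSum (fun k : ℕ => (k ! : ℂ)⁻¹ * z ^ k) (exp z) := by
    simpa [Complex.exp_eq_exp_ℂ] using NormedSpace.exp_series_hasSum_exp' (𝕂 := ℂ) z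
  have htail := (hasSum_nat_add_iff' 1).mpr hexp
  rw [Finset.sum_range_one, pow_zero, Nat.factorial_zero, Nat.cast_one, inv_one, one_mul] at htail
  refine ((hasSum_Jfun z).mul_left z).unique (htail.congr_fun fun k => ?_)
  ring

theorem Jfun_zero : Jfun 0 = 1 := by
  simpa using (hasSum_Jfun 0).tsum_eq.symm.trans (tsum_eq_single 0 fun k hk => by simp [hk])

theorem Jfun_eq_zero_iff (z : ℂ) :
    Jfun z = 0 ↔ ∃ k : ℤ, k ≠ 0 ∧ z = 2 * k * Real.pi * I := by
  constructor
  · intro h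
    have hz : z ≠ 0 := by rintro rfl; simp [Jfun_zero] at h
    obtain ⟨k, rfl⟩ := Complex.exp_eq_one_iff.mp (by linear_combination (mul_Jfun z).symm + z * h)
    exact ⟨k, by rintro rfl; simp at hz, by ring⟩
  · rintro ⟨k, hk, rfl⟩
    have hz : 2 * (k : ℂ) * Real.pi * I ≠ 0 := by simp [hk, Real.pi_ne_zero]
    have hexp : exp (2 * k * Real.pi * I) = 1 := Complex.exp_eq_one_iff.mpr ⟨k, by ring⟩
    simpa [hexp, hz] using mul_Jfun (2 * k * Real.pi * I)

theorem Matrix.pow_mulVec_of_mulVec_eq_smul {R n : Type*} [CommSemiring R] [Fintype n]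
    [DecidableEq n] {M : Matrix n n R} {μ : R} {v : n → R} (hv : M *ᵥ v = μ • v) (k : ℕ) :
    M ^ k *ᵥ v = μ ^ k • v := by
  induction k with
  | zero => simp
  | succ k ih => rw [pow_succ', ← mulVec_mulVec, ih, mulVec_smul, hv, smul_smul, ← pow_succ]

theorem Jmat_mulVec_of_mulVec_eq_smul {n : ℕ} {M : Matrix (Fin n) (Fin n) ℂ} {μ : ℂ}
    {v : Fin n → ℂ} (hv : M *ᵥ v = μ • v) : Jmat M *ᵥ v = Jfun μ • v := by
  refine ((hasSum_Jmat M).map (mulVec.addMonoidHomLeft v)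
    (continuous_id.matrix_mulVec continuous_const)).unique ?_
  convert (hasSum_Jfun μ).smul_const v using 1
  funext k
  simp [mulVec.addMonoidHomLeft, smul_mulVec, pow_mulVec_of_mulVec_eq_smul hv, mul_smul]

theorem commute_Jmat {n : ℕ} (M : Matrix (Fin n) (Fin n) ℂ) : Commute M (Jmat M) :=
  .tsum_right M fun k => ((Commute.refl M).pow_right k).smul_right _

theorem Matrix.mem_spectrum_iff_exists_mulVec_eq_smul {K n : Type*} [Field K] [Fintype n]
    [DecidableEq n] {M : Matrix n n K} {μ : K} :
    μ ∈ spectrum K M ↔ ∃ v ≠ 0, M *ᵥ v = μ • v := by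
  simp [← spectrum_toLin', ← hasEigenvalue_iff_mem_spectrum, hasEigenvalue_iff,
    Submodule.ne_bot_iff, and_comm]

theorem Module.End.exists_hasEigenvector_mem_of_mapsTo {K V : Type*} [Field K] [IsAlgClosed K]
    [AddCommGroup V] [Module K V] [FiniteDimensional K V] {f : End K V} {p : Submodule K V}
    (hp : p ≠ ⊥) (hfp : ∀ x ∈ p, f x ∈ p) : ∃ μ, ∃ x ∈ p, f.HasEigenvector μ x := by
  have : Nontrivial p := Submodule.nontrivial_iff_ne_bot.mpr hp
  obtain ⟨μ, hμ⟩ := Module.End.exists_eigenvalue (f.restrict hfp)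
  obtain ⟨x, hx⟩ := hμ.exists_hasEigenvector
  refine ⟨μ, x, x.2, hasEigenvector_iff.mpr ⟨mem_eigenspace_iff.mpr ?_, ?_⟩⟩
  · simpa using congrArg Subtype.val hx.apply_eq_smul
  · exact_mod_cast hx.2

theorem Matrix.exists_mulVec_eq_smul_of_commute_of_not_isUnit {K n : Type*} [Field K]
    [IsAlgClosed K] [Fintype n] [DecidableEq n] {A B : Matrix n n K} (hAB : Commute A B)
    (hB : ¬IsUnit B) : ∃ μ : K, ∃ v ≠ 0, A *ᵥ v = μ • v ∧ B *ᵥ v = 0 := by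
  have hker : LinearMap.ker (toLin' B) ≠ ⊥ := by
    rwa [Ne, LinearMap.ker_eq_bot, toLin'_apply', coe_mulVecLin, mulVec_injective_iff_isUnit]
  have hinv : ∀ x ∈ LinearMap.ker (toLin' B), toLin' A x ∈ LinearMap.ker (toLin' B) := by
    intro x hx
    simp only [LinearMap.mem_ker, toLin'_apply] at hx ⊢
    rw [mulVec_mulVec, ← hAB.eq, ← mulVec_mulVec, hx, mulVec_zero]
  obtain ⟨μ, v, hvB, hv⟩ := Module.End.exists_hasEigenvector_mem_of_mapsTo hker hinv
  exact ⟨μ, v, hv.2, by simpa using hv.apply_eq_smul, by simpa using hvB⟩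

/-- `J(M) = ∑_{k≥0} M^k/(k+1)!` is invertible if and only if no eigenvalue of `M`
belongs to `{2kπi : k ∈ ℤ, k ≠ 0}`. -/
theorem Jmat_isUnit_iff {n : ℕ} (M : Matrix (Fin n) (Fin n) ℂ) :
    IsUnit (Jmat M) ↔
      ∀ lam ∈ spectrum ℂ M, ∀ k : ℤ, k ≠ 0 → lam ≠ 2 * (k : ℂ) * (Real.pi : ℂ) * Complex.I := by
  constructor
  · rintro hJ μ hμ k hk rfl
    obtain ⟨v, hv0, hv⟩ := mem_spectrum_iff_exists_mulVec_eq_smul.mp hμ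
    have hJv : Jmat M *ᵥ v = Jmat M *ᵥ 0 := by
      rw [Jmat_mulVec_of_mulVec_eq_smul hv, (Jfun_eq_zero_iff _).mpr ⟨k, hk, rfl⟩, zero_smul,
        mulVec_zero]
    exact hv0 (mulVec_injective_iff_isUnit.mpr hJ hJv)
  · contrapose!
    intro hJ
    obtain ⟨μ, v, hv0, hv, hJv⟩ :=
      exists_mulVec_eq_smul_of_commute_of_not_isUnit (commute_Jmat M) hJ
    rw [Jmat_mulVec_of_mulVec_eq_smul hv, smul_eq_zero] at hJv
    obtain ⟨k, hk, rfl⟩ := (Jfun_eq_zero_iff μ).mp (hJv.resolve_right hv0)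
    exact ⟨_, mem_spectrum_iff_exists_mulVec_eq_smul.mpr ⟨v, hv0, hv⟩, k, hk, rfl⟩
end

section
/- If f₀ satisfies f₀(X₁X₂) = f₀(X₁)X₂ + X₁f₀(X₂) for all X₁, X₂ in a matrix group G, and X, X̄ are differentiable curves in G satisfying Ẋ = X v_b + v_g X + f₀(X) and X̄' = X̄ v_b + X̄ w + v_g X̄ + f₀(X̄), then the left-invariant error η_L = X^{-1} X̄ satisfies η̇_L = −v_b η_L + η_L v_b + η_L w + f₀(η_L). -/
/-!
Differentiating `η = X⁻¹ X̄` gives `η̇ = -X⁻¹ Ẋ X⁻¹ X̄ + X⁻¹ X̄'`. Applying the Leibniz rule of `f₀` to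
`X η = X̄` gives `f₀(η) = X⁻¹ f₀(X̄) - X⁻¹ f₀(X) η`, so the `f₀` terms of `η̇` combine into `f₀(η)`,
while the `v_g` terms cancel because `v_g` multiplies both `X` and `X̄` on the left.
-/

attribute [local instance] Matrix.linftyOpNormedRing Matrix.linftyOpNormedAlgebra

open Ring

theorem leibniz_inverse_mul {R : Type*} [Ring R] {D : R → R} {a b : R} (ha : IsUnit a)
    (hD : D (a * (a⁻¹ʳ * b)) = D a * (a⁻¹ʳ * b) + a * D (a⁻¹ʳ * b)) :
    D (a⁻¹ʳ * b) = a⁻¹ʳ * D b - a⁻¹ʳ * D a * (a⁻¹ʳ * b) := by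
  rw [mul_inverse_cancel_left _ _ ha] at hD
  rw [hD, mul_add, inverse_mul_cancel_left _ _ ha, mul_assoc]
  abel

theorem neg_inverse_mul_add_inverse_mul_eq_of_leibniz {R : Type*} [Ring R] {D : R → R}
    {a b vb vg w : R} (ha : IsUnit a)
    (hD : D (a * (a⁻¹ʳ * b)) = D a * (a⁻¹ʳ * b) + a * D (a⁻¹ʳ * b)) :
    -(a⁻¹ʳ * (a * vb + vg * a + D a) * a⁻¹ʳ) * b + a⁻¹ʳ * (b * vb + b * w + vg * b + D b) =
      -vb * (a⁻¹ʳ * b) + a⁻¹ʳ * b * vb + a⁻¹ʳ * b * w + D (a⁻¹ʳ * b) := by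
  rw [leibniz_inverse_mul ha hD]
  obtain ⟨u, rfl⟩ := ha
  simp only [inverse_unit, mul_add, add_mul, mul_assoc, u.inv_mul_cancel_left,
    u.mul_inv_cancel_left, neg_mul, neg_add]
  noncomm_ring

section NormedAlgebra

variable {𝕜 R : Type*} [NontriviallyNormedField 𝕜] [NormedRing R] [HasSummableGeomSeries R]
  [NormedAlgebra 𝕜 R]

theorem HasDerivAt.ringInverse {f : 𝕜 → R} {f' : R} {t : 𝕜} (hf : HasDerivAt f f' t)
    (ht : IsUnit (f t)) :
    HasDerivAt (fun s => (f s)⁻¹ʳ) (-((f t)⁻¹ʳ * f' * (f t)⁻¹ʳ)) t := by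
  obtain ⟨u, hu⟩ := ht
  have hinv := hasFDerivAt_ringInverse (𝕜 := 𝕜) u
  rw [hu] at hinv
  simpa [← hu, mul_assoc, Function.comp_def] using hinv.comp_hasDerivAt t hf

theorem hasDerivAt_inverse_mul_of_leibniz {D : R → R}
    (hD : ∀ a b : R, IsUnit a → IsUnit b → D (a * b) = D a * b + a * D b)
    {X Xb : 𝕜 → R} {vb vg w : R} {t : 𝕜} (hXt : IsUnit (X t)) (hXbt : IsUnit (Xb t))
    (hX : HasDerivAt X (X t * vb + vg * X t + D (X t)) t)
    (hXb : HasDerivAt Xb (Xb t * vb + Xb t * w + vg * Xb t + D (Xb t)) t) :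
    HasDerivAt (fun s => (X s)⁻¹ʳ * Xb s)
      (-vb * ((X t)⁻¹ʳ * Xb t) + (X t)⁻¹ʳ * Xb t * vb + (X t)⁻¹ʳ * Xb t * w
        + D ((X t)⁻¹ʳ * Xb t)) t := by
  have hηt : IsUnit ((X t)⁻¹ʳ * Xb t) := hXt.ringInverse.mul hXbt
  rw [← neg_inverse_mul_add_inverse_mul_eq_of_leibniz hXt (hD _ _ hXt hηt)]
  exact (hX.ringInverse hXt).mul hXb

end NormedAlgebra

/-- If `f₀` satisfies `f₀(X₁X₂) = f₀(X₁)X₂ + X₁f₀(X₂)` on the group, and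
`X, X̄` are differentiable curves in the group with `Ẋ = X v_b + v_g X + f₀(X)` and
`X̄' = X̄ v_b + X̄ w + v_g X̄ + f₀(X̄)`, then the left-invariant error `η_L = X⁻¹ X̄` satisfies
`η̇_L = −v_b η_L + η_L v_b + η_L w + f₀(η_L)`. -/
theorem left_invariant_error_dynamics (n : ℕ)
    (f₀ : Matrix (Fin n) (Fin n) ℝ → Matrix (Fin n) (Fin n) ℝ)
    (hf : ∀ X₁ X₂ : Matrix (Fin n) (Fin n) ℝ, IsUnit X₁ → IsUnit X₂ →
      f₀ (X₁ * X₂) = f₀ X₁ * X₂ + X₁ * f₀ X₂)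
    (X Xb vb vg w : ℝ → Matrix (Fin n) (Fin n) ℝ)
    (hXunit : ∀ t, IsUnit (X t)) (hXbunit : ∀ t, IsUnit (Xb t))
    (hX : ∀ t, HasDerivAt X (X t * vb t + vg t * X t + f₀ (X t)) t)
    (hXb : ∀ t, HasDerivAt Xb (Xb t * vb t + Xb t * w t + vg t * Xb t + f₀ (Xb t)) t)
    (t : ℝ) :
    HasDerivAt (fun s => (X s)⁻¹ * Xb s)
      (-(vb t) * ((X t)⁻¹ * Xb t) + ((X t)⁻¹ * Xb t) * vb t
        + ((X t)⁻¹ * Xb t) * w t + f₀ ((X t)⁻¹ * Xb t)) t := by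
  simp only [Matrix.nonsing_inv_eq_ringInverse]
  exact hasDerivAt_inverse_mul_of_leibniz hf (hXunit t) (hXbunit t) (hX t) (hXb t)
end

section
/- For a differentiable matrix-valued curve X(t), the derivative of its exponential satisfies d/dt e^{X(t)} = e^{X(t)} · J(−ad_{X(t)})(Ẋ(t)), where J(M) = Σ_{n≥0} M^n/(n+1)! applied to the operator −ad_{X(t)}, i.e., d/dt e^{X} = e^{X} Σ_{n≥0} (−1)^n (ad_X)^n(Ẋ)/(n+1)!. -/
/-!
Let `L` and `R` be left and right multiplication by `A`; they commute. Differentiating the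
exponential series term by term, `exp'(A) = ∑ₘ 1/(m+1)! ∑_{a+b=m} Lᵃ Rᵇ`. Substituting
`R = L + (R - L)` and expanding binomially, `∑_{a+b=m} Lᵃ Rᵇ = ∑_{a+b=m} C(m+1, b+1) Lᵃ (R - L)ᵇ`,
and `C(m+1, b+1)/(m+1)! = 1/(a! (b+1)!)` exhibits the series as the Cauchy product of
`exp L = ∑ Lᵃ/a!` and `J(R - L) = ∑ (R - L)ᵇ/(b+1)!`. Finally `exp L` is left multiplication by
`exp A`, and `R - L = -ad_A`.
-/

open Finset
open scoped Nat

theorem Commute.sum_antidiagonal_pow_mul_add_pow {R : Type*} [Semiring R] {x z : R}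
    (h : Commute x z) (m : ℕ) :
    ∑ p ∈ antidiagonal m, x ^ p.1 * (x + z) ^ p.2 =
      ∑ p ∈ antidiagonal m, (m + 1).choose (p.2 + 1) • (x ^ p.1 * z ^ p.2) := by
  induction m with
  | zero => simp
  | succ m ih =>
    have binomial : (x + z) ^ (m + 1) =
        z ^ (m + 1) + ∑ p ∈ antidiagonal m, (m + 1).choose p.2 • (x ^ (p.1 + 1) * z ^ p.2) := by
      rw [h.add_pow', Nat.sum_antidiagonal_succ]
      simp only [Nat.choose_zero_right, pow_zero, one_mul, one_smul]
      congr 1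
      refine sum_congr rfl fun p hp => ?_
      have hp : p.1 + p.2 = m := mem_antidiagonal.mp hp
      rw [Nat.choose_symm_of_eq_add (n := m + 1) (a := p.1 + 1) (b := p.2) (by omega)]
    rw [Nat.sum_antidiagonal_succ, Nat.sum_antidiagonal_succ]
    simp only [pow_zero, one_mul, pow_succ' x, mul_assoc, ← mul_sum, ih]
    rw [binomial, mul_sum]
    simp only [Nat.choose_self, one_smul, Nat.choose_succ_succ' (m + 1), add_smul,
      sum_add_distrib, mul_smul_comm, pow_succ' x, mul_assoc]
    abel

theorem inv_factorial_mul_choose (a b : ℕ) :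
    ((a + b + 1)! : ℝ)⁻¹ * (a + b + 1).choose (b + 1) = (a ! : ℝ)⁻¹ * ((b + 1)! : ℝ)⁻¹ := by
  rw [add_assoc, ← Nat.choose_symm_add, Nat.cast_add_choose]
  field_simp

section NormedRing

variable {R : Type*} [SeminormedRing R]

theorem norm_pow_mul_le (a x : R) (n : ℕ) : ‖a ^ n * x‖ ≤ ‖a‖ ^ n * ‖x‖ := by
  induction n with
  | zero => simp
  | succ n ih =>
    calc ‖a ^ (n + 1) * x‖ = ‖a * (a ^ n * x)‖ := by rw [pow_succ', mul_assoc]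
      _ ≤ ‖a‖ * (‖a‖ ^ n * ‖x‖) := (norm_mul_le _ _).trans (by gcongr)
      _ = ‖a‖ ^ (n + 1) * ‖x‖ := by ring

theorem norm_mul_pow_le (x b : R) (n : ℕ) : ‖x * b ^ n‖ ≤ ‖x‖ * ‖b‖ ^ n := by
  induction n with
  | zero => simp
  | succ n ih =>
    calc ‖x * b ^ (n + 1)‖ = ‖x * b ^ n * b‖ := by rw [pow_succ, mul_assoc]
      _ ≤ ‖x‖ * ‖b‖ ^ n * ‖b‖ := (norm_mul_le _ _).trans (by gcongr)
      _ = ‖x‖ * ‖b‖ ^ (n + 1) := by ring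

end NormedRing

section CauchyProduct

variable {B : Type*} [NormedRing B] [NormedAlgebra ℝ B]

theorem summable_norm_inv_factorial_succ_smul_pow (x : B) :
    Summable fun k : ℕ => ‖((k + 1)! : ℝ)⁻¹ • x ^ k‖ := by
  refine (NormedSpace.norm_expSeries_summable' (𝕂 := ℝ) x).of_nonneg_of_le
    (fun _ => norm_nonneg _) fun k => ?_
  simp only [norm_smul, norm_inv, RCLike.norm_natCast]
  gcongr
  exact k.le_succ

theorem Commute.tsum_smul_sum_antidiagonal_pow_mul_pow_eq_exp_mul [CompleteSpace B] {L R : B}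
    (h : Commute L R) :
    ∑' m : ℕ, ((m + 1)! : ℝ)⁻¹ • ∑ p ∈ antidiagonal m, L ^ p.1 * R ^ p.2 =
      NormedSpace.exp L * ∑' k : ℕ, ((k + 1)! : ℝ)⁻¹ • (R - L) ^ k := by
  rw [NormedSpace.exp_eq_tsum ℝ, tsum_mul_tsum_eq_tsum_sum_antidiagonal_of_summable_norm
    (NormedSpace.norm_expSeries_summable' L) (summable_norm_inv_factorial_succ_smul_pow (R - L))]
  refine tsum_congr fun m => ?_
  conv_lhs => rw [← add_sub_cancel L R]
  rw [(h.sub_right (Commute.refl L)).sum_antidiagonal_pow_mul_add_pow, smul_sum]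
  refine sum_congr rfl fun p hp => ?_
  obtain rfl : p.1 + p.2 = m := mem_antidiagonal.mp hp
  rw [smul_mul_smul_comm, ← Nat.cast_smul_eq_nsmul ℝ, smul_smul, inv_factorial_mul_choose]

end CauchyProduct

section MulOperators

variable {𝔸 : Type*} [NormedRing 𝔸] [NormedAlgebra ℝ 𝔸]

theorem commute_mul_flip_mul (a b : 𝔸) :
    Commute (ContinuousLinearMap.mul ℝ 𝔸 a) ((ContinuousLinearMap.mul ℝ 𝔸).flip b) := by
  ext x
  simp [mul_assoc]

theorem mul_pow_apply (a x : 𝔸) (n : ℕ) : (ContinuousLinearMap.mul ℝ 𝔸 a ^ n) x = a ^ n * x := by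
  rw [pow_apply_eq_iterate]
  exact congrFun (mul_left_iterate a n) x

theorem flip_mul_pow_apply (b x : 𝔸) (n : ℕ) :
    ((ContinuousLinearMap.mul ℝ 𝔸).flip b ^ n) x = x * b ^ n := by
  rw [pow_apply_eq_iterate]
  exact congrFun (mul_right_iterate b n) x

theorem mul_pow_mul_flip_mul_pow_apply (a b x : 𝔸) (j i : ℕ) :
    (ContinuousLinearMap.mul ℝ 𝔸 a ^ j * (ContinuousLinearMap.mul ℝ 𝔸).flip b ^ i) x =
      a ^ j * x * b ^ i := by
  rw [mul_apply_eq_comp, flip_mul_pow_apply, mul_pow_apply, mul_assoc]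

theorem norm_sum_antidiagonal_mul_pow_mul_flip_mul_pow_le (a : 𝔸) (m : ℕ) :
    ‖∑ p ∈ antidiagonal m,
        ContinuousLinearMap.mul ℝ 𝔸 a ^ p.1 * (ContinuousLinearMap.mul ℝ 𝔸).flip a ^ p.2‖ ≤
      (m + 1) * ‖a‖ ^ m := by
  have hterm : ∀ p ∈ antidiagonal m,
      ‖ContinuousLinearMap.mul ℝ 𝔸 a ^ p.1 * (ContinuousLinearMap.mul ℝ 𝔸).flip a ^ p.2‖ ≤
        ‖a‖ ^ m := by
    intro p hp
    refine ContinuousLinearMap.opNorm_le_bound _ (by positivity) fun x => ?_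
    rw [mul_pow_mul_flip_mul_pow_apply, ← mem_antidiagonal.mp hp, pow_add]
    calc ‖a ^ p.1 * x * a ^ p.2‖ ≤ ‖a‖ ^ p.1 * ‖x‖ * ‖a‖ ^ p.2 :=
          (norm_mul_pow_le _ _ _).trans (by gcongr; exact norm_pow_mul_le _ _ _)
      _ = ‖a‖ ^ p.1 * ‖a‖ ^ p.2 * ‖x‖ := by ring
  calc _ ≤ ∑ _p ∈ antidiagonal m, ‖a‖ ^ m := (norm_sum_le _ _).trans (sum_le_sum hterm)
    _ = (m + 1) * ‖a‖ ^ m := by simp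

theorem hasFDerivAt_pow_succ_eq_sum_antidiagonal (a : 𝔸) (m : ℕ) :
    HasFDerivAt (fun x : 𝔸 => x ^ (m + 1))
      (∑ p ∈ antidiagonal m,
        ContinuousLinearMap.mul ℝ 𝔸 a ^ p.1 * (ContinuousLinearMap.mul ℝ 𝔸).flip a ^ p.2) a := by
  refine (hasFDerivAt_pow' (m + 1)).congr_fderiv ?_
  ext x
  rw [← Nat.sum_antidiagonal_swap, Nat.sum_antidiagonal_eq_sum_range_succ_mk]
  simp only [_root_.sum_apply, mul_pow_mul_flip_mul_pow_apply]
  simp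

end MulOperators

section ExpDeriv

variable {𝔸 : Type*} [NormedRing 𝔸] [NormedAlgebra ℝ 𝔸] [CompleteSpace 𝔸]

theorem exp_eq_one_add_tsum (a : 𝔸) :
    NormedSpace.exp a = 1 + ∑' m : ℕ, ((m + 1)! : ℝ)⁻¹ • a ^ (m + 1) := by
  rw [congrFun (NormedSpace.exp_eq_tsum ℝ) a, (NormedSpace.expSeries_summable' a).tsum_eq_zero_add]
  simp

theorem hasFDerivAt_exp_eq_tsum (a : 𝔸) :
    HasFDerivAt NormedSpace.exp
      (∑' m : ℕ, ((m + 1)! : ℝ)⁻¹ • ∑ p ∈ antidiagonal m,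
        ContinuousLinearMap.mul ℝ 𝔸 a ^ p.1 * (ContinuousLinearMap.mul ℝ 𝔸).flip a ^ p.2) a := by
  set r := ‖a‖ + 1
  have hbound : ∀ (m : ℕ), ∀ x ∈ Metric.ball (0 : 𝔸) r,
      ‖((m + 1)! : ℝ)⁻¹ • ∑ p ∈ antidiagonal m,
        ContinuousLinearMap.mul ℝ 𝔸 x ^ p.1 * (ContinuousLinearMap.mul ℝ 𝔸).flip x ^ p.2‖ ≤
        r ^ m / m ! := by
    intro m x hx
    have hxr : ‖x‖ ≤ r := (mem_ball_zero_iff.mp hx).le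
    rw [norm_smul, norm_inv, RCLike.norm_natCast, Nat.factorial_succ]
    push_cast
    calc _ ≤ ((m + 1) * m ! : ℝ)⁻¹ * ((m + 1) * r ^ m) := by
          gcongr
          exact (norm_sum_antidiagonal_mul_pow_mul_flip_mul_pow_le x m).trans (by gcongr)
      _ = r ^ m / m ! := by field_simp
  have hseries := hasFDerivAt_tsum_of_isPreconnected (Real.summable_pow_div_factorial r)
    Metric.isOpen_ball (convex_ball (0 : 𝔸) r).isPreconnected
    (fun m x _ => (hasFDerivAt_pow_succ_eq_sum_antidiagonal x m).const_smul ((m + 1)! : ℝ)⁻¹)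
    hbound (Metric.mem_ball_self (by positivity)) (by simp)
    (mem_ball_zero_iff.mpr (lt_add_one _))
  rw [funext exp_eq_one_add_tsum]
  exact hseries.const_add 1

theorem exp_mul_apply (a x : 𝔸) :
    NormedSpace.exp (ContinuousLinearMap.mul ℝ 𝔸 a) x = NormedSpace.exp a * x := by
  rw [congrFun (NormedSpace.exp_eq_tsum ℝ) a, congrFun (NormedSpace.exp_eq_tsum ℝ),
    ← ContinuousLinearMap.apply_apply (𝕜 := ℝ) x,
    (ContinuousLinearMap.apply ℝ 𝔸 x).map_tsum (NormedSpace.expSeries_summable' _),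
    ← (NormedSpace.expSeries_summable' a).tsum_mul_right]
  refine tsum_congr fun n => ?_
  rw [ContinuousLinearMap.apply_apply, smul_apply, mul_pow_apply, smul_mul_assoc]

theorem tsum_smul_flip_mul_sub_mul_pow_apply (a x : 𝔸) :
    (∑' k : ℕ, ((k + 1)! : ℝ)⁻¹ •
        ((ContinuousLinearMap.mul ℝ 𝔸).flip a - ContinuousLinearMap.mul ℝ 𝔸 a) ^ k) x =
      ∑' k : ℕ, ((-1 : ℝ) ^ k * ((k + 1)! : ℝ)⁻¹) • (fun y : 𝔸 => a * y - y * a)^[k] x := by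
  set N := (ContinuousLinearMap.mul ℝ 𝔸).flip a - ContinuousLinearMap.mul ℝ 𝔸 a
  rw [← ContinuousLinearMap.apply_apply (𝕜 := ℝ) x,
    (ContinuousLinearMap.apply ℝ 𝔸 x).map_tsum (summable_norm_inv_factorial_succ_smul_pow N).of_norm]
  refine tsum_congr fun k => ?_
  have hN : N =
      (-1 : ℝ) • (ContinuousLinearMap.mul ℝ 𝔸 a - (ContinuousLinearMap.mul ℝ 𝔸).flip a) := by
    rw [neg_one_smul, neg_sub]
  rw [ContinuousLinearMap.apply_apply, hN, smul_pow, smul_smul, mul_comm, smul_apply,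
    pow_apply_eq_iterate]
  rfl

end ExpDeriv

attribute [local instance] Matrix.linftyOpNormedRing Matrix.linftyOpNormedAlgebra

/-- For a differentiable matrix-valued curve `X(t)`,
`d/dt e^{X(t)} = e^{X(t)} · Σ_{k≥0} (−1)^k (ad_{X(t)})^k (Ẋ(t)) / (k+1)!`,
i.e. `d/dt e^{X} = e^{X} J(−ad_X)(Ẋ)` with `J(M) = Σ_{k≥0} M^k/(k+1)!`. -/
theorem deriv_exp_eq_exp_mul_J (n : ℕ) (X : ℝ → Matrix (Fin n) (Fin n) ℝ)
    (D : Matrix (Fin n) (Fin n) ℝ) (t : ℝ) (hX : HasDerivAt X D t) :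
    HasDerivAt (fun s => NormedSpace.exp (X s))
      (NormedSpace.exp (X t) *
        ∑' k : ℕ, ((-1 : ℝ) ^ k * ((k + 1).factorial : ℝ)⁻¹) •
          (fun Y : Matrix (Fin n) (Fin n) ℝ => X t * Y - Y * X t)^[k] D) t := by
  have h := (hasFDerivAt_exp_eq_tsum (X t)).comp_hasDerivAt t hX
  rwa [(commute_mul_flip_mul (X t) (X t)).tsum_smul_sum_antidiagonal_pow_mul_pow_eq_exp_mul,
    mul_apply_eq_comp, exp_mul_apply, tsum_smul_flip_mul_sub_mul_pow_apply] at h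
end

section
/- For the discrete transition matrix Φ = [[I,0,0,0],[½g^∧δt², I, Iδt, 0],[g^∧δt, 0, I, 0],[0,0,0,I]] (12×12, blocks 3×3) and observation matrix H = [0, −I, 0, I], the observability matrix with rows H, HΦ, HΦ², … has rank at most 9; in particular its kernel contains the 3-dimensional subspace {(0, u, 0, u) : u ∈ ℝ³} and additionally the direction corresponding to rotations about gravity. -/
/-- The hat map on `ℝ³`. -/
def hat (g : Fin 3 → ℝ) : Matrix (Fin 3) (Fin 3) ℝ :=
  !![0, -g 2, g 1; g 2, 0, -g 0; -g 1, g 0, 0]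

/-- The 12×12 discrete transition matrix
`Φ = [[I,0,0,0],[½g^∧δt², I, Iδt, 0],[g^∧δt, 0, I, 0],[0,0,0,I]]` (3×3 blocks). -/
noncomputable def Phi (g : Fin 3 → ℝ) (δt : ℝ) :
    Matrix (Fin 4 × Fin 3) (Fin 4 × Fin 3) ℝ :=
  Matrix.of fun p q =>
    (![![1, 0, 0, 0],
       ![(δt ^ 2 / 2) • hat g, 1, δt • (1 : Matrix (Fin 3) (Fin 3) ℝ), 0],
       ![δt • hat g, 0, 1, 0],
       ![0, 0, 0, 1]] p.1 q.1 : Matrix (Fin 3) (Fin 3) ℝ) p.2 q.2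

/-- The observation matrix `H = [0, −I, 0, I]`. -/
def Hmat : Matrix (Fin 3) (Fin 4 × Fin 3) ℝ :=
  Matrix.of fun i q =>
    (![0, -1, 0, (1 : Matrix (Fin 3) (Fin 3) ℝ)] q.1 : Matrix (Fin 3) (Fin 3) ℝ) i q.2

/-- The observability map, stacking `H Φ^k` for `k = 0, 1, 2, …`. -/
noncomputable def Obs (g : Fin 3 → ℝ) (δt : ℝ) :
    (Fin 4 × Fin 3 → ℝ) →ₗ[ℝ] (ℕ → Fin 3 → ℝ) :=
  LinearMap.pi fun k => (Hmat * (Phi g δt) ^ k).mulVecLin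

/-! Both directions are fixed by `Φ` and killed by `H`, hence killed by every `H Φ^k`. For
`(0, u, 0, u)` this is because `H` only reads the difference of blocks 3 and 1, and `Φ` leaves
blocks 1 and 3 alone once blocks 0 and 2 vanish; for `(g, 0, 0, 0)` it is because
`g^∧ g = g × g = 0`. The translations `(0, u, 0, u)` form a 3-dimensional subspace of the
kernel, so rank–nullity bounds the rank by `12 - 3`. -/

open Matrix Function

section FixedVectors

variable {m n R : Type*} [Fintype n] [DecidableEq n] [CommSemiring R]

theorem Matrix.pow_mulVec_eq_self {A : Matrix n n R} {v : n → R} (hv : A *ᵥ v = v) (k : ℕ) :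
    (A ^ k) *ᵥ v = v := by
  induction k with
  | zero => simp
  | succ k ih => rw [pow_succ, ← mulVec_mulVec, hv, ih]

theorem Matrix.mul_pow_mulVec_eq_zero {H : Matrix m n R} {A : Matrix n n R} {v : n → R}
    (hA : A *ᵥ v = v) (hH : H *ᵥ v = 0) (k : ℕ) : (H * A ^ k) *ᵥ v = 0 := by
  rw [← mulVec_mulVec, pow_mulVec_eq_self hA, hH]

end FixedVectors

theorem LinearMap.finrank_range_add_finrank_le_of_comp_eq_zero {K U V W : Type*} [Field K]
    [AddCommGroup U] [AddCommGroup V] [AddCommGroup W] [Module K U] [Module K V] [Module K W]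
    [FiniteDimensional K V] (f : V →ₗ[K] W) {L : U →ₗ[K] V} (hL : Injective L)
    (hfL : f ∘ₗ L = 0) : Module.finrank K (range f) + Module.finrank K U ≤ Module.finrank K V := by
  have hLker : range L ≤ ker f := by
    rintro _ ⟨u, rfl⟩
    exact LinearMap.congr_fun hfL u
  rw [← finrank_range_add_finrank_ker f, ← finrank_range_of_inj hL]
  exact Nat.add_le_add_left (Submodule.finrank_mono hLker) _

theorem hat_mulVec (g v : Fin 3 → ℝ) : hat g *ᵥ v = g ⨯₃ v := by
  rw [hat, cross_apply]
  ext i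
  fin_cases i <;>
    simp only [mulVec, dotProduct, Fin.sum_univ_three, of_apply, cons_val', cons_val_fin_one,
      cons_val_zero, cons_val_one, cons_val, Fin.isValue, Fin.zero_eta, Fin.mk_one,
      Fin.reduceFinMk] <;>
    ring

theorem hat_mulVec_self (g : Fin 3 → ℝ) : hat g *ᵥ g = 0 := by
  rw [hat_mulVec, cross_self]

theorem Phi_mulVec (g : Fin 3 → ℝ) (δt : ℝ) (v : Fin 4 × Fin 3 → ℝ) :
    Phi g δt *ᵥ v = fun p =>
      ![curry v 0,
        (δt ^ 2 / 2) • (hat g *ᵥ curry v 0) + curry v 1 + δt • curry v 2,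
        δt • (hat g *ᵥ curry v 0) + curry v 2,
        curry v 3] p.1 p.2 := by
  ext ⟨i, j⟩
  simp only [Phi, mulVec, dotProduct, of_apply, Fintype.sum_prod_type, Fin.sum_univ_four]
  fin_cases i <;>
    simp only [Fin.isValue, Fin.zero_eta, Fin.mk_one, Fin.reduceFinMk, cons_val_zero,
      cons_val_one, cons_val] <;>
    simp [mulVec, dotProduct, Matrix.smul_apply, one_apply, curry, Finset.mul_sum, mul_assoc]

theorem Hmat_mulVec (v : Fin 4 × Fin 3 → ℝ) : Hmat *ᵥ v = curry v 3 - curry v 1 := by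
  ext j
  simp only [Hmat, mulVec, dotProduct, of_apply, Fintype.sum_prod_type, Fin.sum_univ_four,
    Fin.isValue, cons_val_zero, cons_val_one, cons_val]
  simp [one_apply, curry, neg_add_eq_sub]

theorem mem_ker_Obs_of_fixed {g : Fin 3 → ℝ} {δt : ℝ} {v : Fin 4 × Fin 3 → ℝ}
    (hΦ : Phi g δt *ᵥ v = v) (hH : Hmat *ᵥ v = 0) : v ∈ LinearMap.ker (Obs g δt) := by
  ext k : 1
  exact mul_pow_mulVec_eq_zero hΦ hH k

def translation : (Fin 3 → ℝ) →ₗ[ℝ] (Fin 4 × Fin 3 → ℝ) where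
  toFun u p := if p.1 = 1 ∨ p.1 = 3 then u p.2 else 0
  map_add' u w := by ext p; by_cases h : p.1 = 1 ∨ p.1 = 3 <;> simp [h]
  map_smul' c u := by ext p; by_cases h : p.1 = 1 ∨ p.1 = 3 <;> simp [h]

theorem translation_injective : Injective translation := fun _ _ h =>
  funext fun j => congr_fun h (1, j)

theorem Phi_mulVec_translation (g : Fin 3 → ℝ) (δt : ℝ) (u : Fin 3 → ℝ) :
    Phi g δt *ᵥ translation u = translation u := by
  have hcurry : curry (translation u) 0 = 0 := by ext; simp [translation, curry]
  rw [Phi_mulVec, hcurry, mulVec_zero]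
  ext ⟨i, j⟩
  fin_cases i <;> simp [translation, curry]

theorem Hmat_mulVec_translation (u : Fin 3 → ℝ) : Hmat *ᵥ translation u = 0 := by
  ext j
  simp [Hmat_mulVec, translation, curry]

def gravityDirection (g : Fin 3 → ℝ) : Fin 4 × Fin 3 → ℝ :=
  fun p => if p.1 = 0 then g p.2 else 0

theorem Phi_mulVec_gravityDirection (g : Fin 3 → ℝ) (δt : ℝ) :
    Phi g δt *ᵥ gravityDirection g = gravityDirection g := by
  have hcurry : curry (gravityDirection g) 0 = g := rfl
  rw [Phi_mulVec, hcurry, hat_mulVec_self]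
  ext ⟨i, j⟩
  fin_cases i <;> simp [gravityDirection, curry]

theorem Hmat_mulVec_gravityDirection (g : Fin 3 → ℝ) : Hmat *ᵥ gravityDirection g = 0 := by
  ext j
  simp [Hmat_mulVec, gravityDirection, curry]

theorem observability_rank_deficient_general (g : Fin 3 → ℝ) (δt : ℝ) :
    (∀ u : Fin 3 → ℝ,
      (fun p : Fin 4 × Fin 3 => if p.1 = 1 ∨ p.1 = 3 then u p.2 else 0)
        ∈ LinearMap.ker (Obs g δt))
    ∧ (fun p : Fin 4 × Fin 3 => if p.1 = 0 then g p.2 else 0) ∈ LinearMap.ker (Obs g δt)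
    ∧ Module.rank ℝ (LinearMap.range (Obs g δt)) ≤ 9 := by
  have htrans (u : Fin 3 → ℝ) : translation u ∈ LinearMap.ker (Obs g δt) :=
    mem_ker_Obs_of_fixed (Phi_mulVec_translation g δt u) (Hmat_mulVec_translation u)
  refine ⟨htrans, mem_ker_Obs_of_fixed (Phi_mulVec_gravityDirection g δt)
    (Hmat_mulVec_gravityDirection g), ?_⟩
  have hdim := (Obs g δt).finrank_range_add_finrank_le_of_comp_eq_zero translation_injective
    (LinearMap.ext htrans)
  simp only [Module.finrank_fintype_fun_eq_card, Fintype.card_prod, Fintype.card_fin] at hdim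
  rw [← Module.finrank_eq_rank]
  exact_mod_cast (by omega : Module.finrank ℝ (LinearMap.range (Obs g δt)) ≤ 9)

/-- The observability matrix with rows `H, HΦ, HΦ², …` has rank at most 9; in
particular its kernel contains the 3-dimensional subspace `{(0,u,0,u) : u ∈ ℝ³}` and
additionally the direction corresponding to rotations about gravity. -/
theorem observability_rank_deficient (g : Fin 3 → ℝ) (δt : ℝ) (hδt : 0 < δt) :
    (∀ u : Fin 3 → ℝ,
      (fun p : Fin 4 × Fin 3 => if p.1 = 1 ∨ p.1 = 3 then u p.2 else 0)
        ∈ LinearMap.ker (Obs g δt))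
    ∧ (fun p : Fin 4 × Fin 3 => if p.1 = 0 then g p.2 else 0) ∈ LinearMap.ker (Obs g δt)
    ∧ Module.rank ℝ (LinearMap.range (Obs g δt)) ≤ 9 :=
  observability_rank_deficient_general g δt
end
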